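/- arXiv:1006.5704 — 2 statements merged into one kernel-verified Lean document; each statement's English description precedes it below -/
import Mathlib

section
/- Fix an evolution (S_0,F_0), …, (S_n,F_n) of t-societies with n ≥ 1 and S_n = ∅. If X ∈ S_{n−1}, then |X| ≥ (n−2)/(4t). -/
/-!
Up to step `n - 1` the group `X` makes a transition at every step. Its `α`-transitions meet
pairwise disjoint chains, so there are at most `|X|` of them. A `γ`-transition needs a recent burst
of `α`-transitions, and a potential argument shows that each `α`-transition pays for at most
`2t - 1` of them. A `β`-transition is made through a friend that itself makes an `α`-transition.
Friendship lasts until the friend dies, and at its death the friend's `γ` condition fails, so its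
`α`-transitions fill at most a `1/(2t)` share of the window from its first use to its death. For a
fixed slot these windows are disjoint, so each slot carries at most `n / (2t)` of the
`β`-transitions. Hence `n - 1 ≤ |X| + (2t - 1)|X| + n / 2`.
-/
open scoped Classical

/-- `X` makes a transition of type α from `S (j-1)` to `S j`:
`X` belongs to `S (j-1)` and has non-empty intersection with the chain `C j`. -/
def TransAlpha {α : Type*} (S : ℕ → Set (Set α)) (C : ℕ → Set α)
    (j : ℕ) (X : Set α) : Prop :=
  X ∈ S (j - 1) ∧ (X ∩ C j).Nonempty

/-- `X` makes a transition of type β from `S (j-1)` to `S j`: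
condition α fails, but some friend of `X` in the `t`-society `(S (j-1), F (j-1))`
has non-empty intersection with `C j`. -/
def TransBeta {α : Type*} (S : ℕ → Set (Set α)) (F : ℕ → Set α → ℕ → Option (Set α))
    (C : ℕ → Set α) (t j : ℕ) (X : Set α) : Prop :=
  X ∈ S (j - 1) ∧ ¬ (X ∩ C j).Nonempty ∧
    ∃ k < t, ∃ Y, F (j - 1) X k = some Y ∧ (Y ∩ C j).Nonempty

/-- `N^α_{i,j}(X)`: the number of indices `l` with `i < l ≤ j` such that `X` makes a
transition of type α from `S (l-1)` to `S l`. -/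
noncomputable def NAlpha {α : Type*} (S : ℕ → Set (Set α)) (C : ℕ → Set α)
    (i j : ℕ) (X : Set α) : ℕ :=
  ((Finset.Ioc i j).filter fun l => TransAlpha S C l X).card

/-- `X` makes a transition of type γ from `S (j-1)` to `S j`:
conditions α and β fail, but there is `i ≤ j - 1` with `N^α_{i,j-1}(X) > ε (j - i)`,
where `ε = 1 / (2 t)`. -/
def TransGamma {α : Type*} (S : ℕ → Set (Set α)) (F : ℕ → Set α → ℕ → Option (Set α))
    (C : ℕ → Set α) (t j : ℕ) (X : Set α) : Prop :=
  X ∈ S (j - 1) ∧ ¬ (X ∩ C j).Nonempty ∧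
    ¬ (∃ k < t, ∃ Y, F (j - 1) X k = some Y ∧ (Y ∩ C j).Nonempty) ∧
    ∃ i ≤ j - 1, (NAlpha S C i (j - 1) X : ℝ) > (1 / (2 * (t : ℝ))) * ((j : ℝ) - (i : ℝ))

/-- `N^β_{i,j}(X)`: the number of indices `l` with `i < l ≤ j` such that `X` makes a
transition of type β from `S (l-1)` to `S l`. -/
noncomputable def NBeta {α : Type*} (S : ℕ → Set (Set α)) (F : ℕ → Set α → ℕ → Option (Set α))
    (C : ℕ → Set α) (t i j : ℕ) (X : Set α) : ℕ :=
  ((Finset.Ioc i j).filter fun l => TransBeta S F C t l X).card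

/-- `N^γ_{i,j}(X)`: the number of indices `l` with `i < l ≤ j` such that `X` makes a
transition of type γ from `S (l-1)` to `S l`. -/
noncomputable def NGamma {α : Type*} (S : ℕ → Set (Set α)) (F : ℕ → Set α → ℕ → Option (Set α))
    (C : ℕ → Set α) (t i j : ℕ) (X : Set α) : ℕ :=
  ((Finset.Ioc i j).filter fun l => TransGamma S F C t l X).card

open Finset

/-- `NAlpha S C i j X` is definitionally `countIoc (TransAlpha S C · X) i j`, and similarly for
`NBeta` and `NGamma`. -/
noncomputable def countIoc (P : ℕ → Prop) (i j : ℕ) : ℕ := #{l ∈ Ioc i j | P l}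

theorem countIoc_self (P : ℕ → Prop) (j : ℕ) : countIoc P j j = 0 := by
  simp [countIoc]

theorem countIoc_succ (P : ℕ → Prop) {i j : ℕ} (h : i ≤ j) :
    countIoc P i (j + 1) = countIoc P i j + if P (j + 1) then 1 else 0 := by
  rw [countIoc, countIoc, ← insert_Ioc_right_eq_Ioc_add_one h, filter_insert]
  split_ifs <;> simp [card_insert_of_notMem]

section Threshold

variable {A G : ℕ → Prop} {m : ℕ}

/-- With `a = countIoc A 0 j` and `g = countIoc G 0 j`, the potential `(m - 1) a - g` dominates
every `m · countIoc A i j - (j - i)`, among them `0` for `i = j`. A `G`-event needs one of these to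
be at least `2`, so the potential stays nonnegative when it drops by one. -/
theorem mul_countIoc_add_le (hm : 0 < m) (hAG : ∀ l, A l → ¬ G l)
    (hG : ∀ j, G (j + 1) → ∃ i ≤ j, j + 1 < m * countIoc A i j + i) (j : ℕ) :
    ∀ i ≤ j, m * countIoc A i j + countIoc G 0 j + countIoc A 0 j + i ≤
      m * countIoc A 0 j + j := by
  induction j with
  | zero =>
    intro i hi
    obtain rfl : i = 0 := by omega
    simp [countIoc_self]
  | succ j ih =>
    intro i hi
    have hj := ih j le_rfl
    rw [countIoc_self] at hj
    rw [countIoc_succ A (Nat.zero_le j), countIoc_succ G (Nat.zero_le j)]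
    rcases hi.lt_or_eq with hi | rfl
    · rw [countIoc_succ A (by omega : i ≤ j)]
      have := ih i (by omega)
      split_ifs with hA hGj
      · exact absurd hGj (hAG _ hA)
      all_goals simp only [mul_add, mul_one]; linarith
    · rw [countIoc_self]
      by_cases hA : A (j + 1)
      · simp only [hA, hAG _ hA, if_true, if_false, mul_add, mul_one]
        linarith
      by_cases hGj : G (j + 1)
      · obtain ⟨i₀, hi₀, hlt⟩ := hG j hGj
        have := ih i₀ hi₀
        simp only [hA, hGj, if_true, if_false]
        linarith
      · simp only [hA, hGj, if_false]
        linarith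

theorem countIoc_add_countIoc_le_mul (hm : 0 < m) (hAG : ∀ l, A l → ¬ G l)
    (hG : ∀ j, G (j + 1) → ∃ i ≤ j, j + 1 < m * countIoc A i j + i) (j : ℕ) :
    countIoc G 0 j + countIoc A 0 j ≤ m * countIoc A 0 j := by
  simpa [countIoc_self] using mul_countIoc_add_le hm hAG hG j j le_rfl

end Threshold

theorem card_filter_inter_nonempty_le_ncard {ι α : Type*} {s : Finset ι} {C : ι → Set α}
    (hC : (s : Set ι).PairwiseDisjoint C) {X : Set α} (hX : X.Finite) :
    #{l ∈ s | (X ∩ C l).Nonempty} ≤ X.ncard := by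
  rw [Set.ncard_eq_toFinset_card X hX]
  refine card_le_card_of_forall_subsingleton (fun l x => x ∈ C l) (fun l hl => ?_) fun x _ => ?_
  · obtain ⟨x, hxX, hxC⟩ := (mem_filter.1 hl).2
    exact ⟨x, hX.mem_toFinset.2 hxX, hxC⟩
  · rintro l ⟨hl, hxl⟩ l' ⟨hl', hxl'⟩
    exact hC.elim_set (mem_filter.1 hl).1 (mem_filter.1 hl').1 x hxl hxl'

theorem mul_card_le_card_of_pairwiseDisjoint {ι κ ν : Type*} {m : ℕ} {B : Finset ι}
    {U : Finset ν} {f : ι → κ} {W : κ → Finset ν}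
    (hcount : ∀ z ∈ B.image f, m * #{l ∈ B | f l = z} ≤ #(W z))
    (hdisj : (B.image f : Set κ).PairwiseDisjoint W) (hsub : ∀ z ∈ B.image f, W z ⊆ U) :
    m * #B ≤ #U :=
  calc m * #B = ∑ z ∈ B.image f, m * #{l ∈ B | f l = z} := by
        rw [card_eq_sum_card_image f B, mul_sum]
    _ ≤ ∑ z ∈ B.image f, #(W z) := sum_le_sum hcount
    _ = #((B.image f).biUnion W) := (card_biUnion hdisj).symm
    _ ≤ #U := card_le_card (biUnion_subset.2 hsub)

theorem one_div_two_mul_mul_sub_lt_iff {t : ℕ} (ht : 0 < t) {N i j : ℕ} :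
    1 / (2 * (t : ℝ)) * ((j : ℝ) - i) < N ↔ j < 2 * t * N + i := by
  rw [one_div_mul_eq_div, div_lt_iff₀ (by positivity), sub_lt_iff_lt_add]
  norm_cast
  rw [mul_comm N]

/-- This is `0` if `Z` never leaves the society, as `sInf ∅ = 0`. -/
noncomputable def deathTime {α : Type*} (S : ℕ → Set (Set α)) (Z : Set α) : ℕ :=
  sInf {j | Z ∉ S j}

namespace Evolution

variable {α : Type*} {n t : ℕ} {S : ℕ → Set (Set α)} {F : ℕ → Set α → ℕ → Option (Set α)}
  {C : ℕ → Set α}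

theorem nAlpha_le_ncard (hCdisj : ∀ i j, 1 ≤ i → 1 ≤ j → i ≠ j → Disjoint (C i) (C j))
    {X : Set α} (hX : X.Finite) (i j : ℕ) : NAlpha S C i j X ≤ X.ncard := by
  refine (card_le_card (monotone_filter_right _ fun l _ hl => hl.2)).trans
    (card_filter_inter_nonempty_le_ncard (fun l hl l' hl' hne => ?_) hX)
  simp only [coe_Ioc, Set.mem_Ioc] at hl hl'
  exact hCdisj l l' (by omega) (by omega) hne

theorem nGamma_add_nAlpha_le (ht : 0 < t) (X : Set α) (j : ℕ) :
    NGamma S F C t 0 j X + NAlpha S C 0 j X ≤ 2 * t * NAlpha S C 0 j X := by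
  refine countIoc_add_countIoc_le_mul (by positivity) (fun l hα hγ => hγ.2.1 hα.2)
    (fun j hγ => ?_) j
  obtain ⟨i, hi, hgt⟩ := hγ.2.2.2
  rw [gt_iff_lt, one_div_two_mul_mul_sub_lt_iff ht] at hgt
  simp only [Nat.add_sub_cancel] at hi hgt
  exact ⟨i, hi, hgt⟩

theorem transAlpha_or_transBeta_or_transGamma_of_gt {j : ℕ} {X : Set α} (hX : X ∈ S (j - 1))
    (h : ∃ i ≤ j - 1, (NAlpha S C i (j - 1) X : ℝ) > 1 / (2 * (t : ℝ)) * ((j : ℝ) - i)) :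
    TransAlpha S C j X ∨ TransBeta S F C t j X ∨ TransGamma S F C t j X := by
  by_cases hα : (X ∩ C j).Nonempty
  · exact .inl ⟨hX, hα⟩
  by_cases hβ : ∃ k < t, ∃ Y, F (j - 1) X k = some Y ∧ (Y ∩ C j).Nonempty
  · exact .inr (.inl ⟨hX, hα, hβ⟩)
  · exact .inr (.inr ⟨hX, hα, hβ, h⟩)

theorem subset_of_le (hSmono : ∀ j, 1 ≤ j → j ≤ n → S j ⊆ S (j - 1)) {i j : ℕ} (hij : i ≤ j)
    (hjn : j ≤ n) : S j ⊆ S i := by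
  induction j, hij using Nat.le_induction with
  | base => exact le_rfl
  | succ j _ ih => exact (hSmono (j + 1) (by omega) hjn).trans (ih (by omega))

theorem le_nAlpha_add_nBeta_add_nGamma (hSmono : ∀ j, 1 ≤ j → j ≤ n → S j ⊆ S (j - 1))
    (hrule : ∀ j, 1 ≤ j → j ≤ n → ∀ X ∈ S (j - 1),
      (X ∈ S j ↔ TransAlpha S C j X ∨ TransBeta S F C t j X ∨ TransGamma S F C t j X))
    {X : Set α} {j : ℕ} (hjn : j ≤ n) (hX : X ∈ S j) :
    j ≤ NAlpha S C 0 j X + NBeta S F C t 0 j X + NGamma S F C t 0 j X := by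
  have hcover : Ioc 0 j ⊆ ({l ∈ Ioc 0 j | TransAlpha S C l X} ∪
      {l ∈ Ioc 0 j | TransBeta S F C t l X}) ∪ {l ∈ Ioc 0 j | TransGamma S F C t l X} := by
    intro l hl
    have hl' := mem_Ioc.1 hl
    have := (hrule l hl'.1 (by omega) X (subset_of_le hSmono (by omega) hjn hX)).1
      (subset_of_le hSmono hl'.2 hjn hX)
    simp only [mem_union, mem_filter]
    tauto
  calc j = #(Ioc 0 j) := by simp
    _ ≤ _ := card_le_card hcover
    _ ≤ _ := (card_union_le _ _).trans (Nat.add_le_add_right (card_union_le _ _) _)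

theorem deathTime_le (hSn : S n = ∅) (Z : Set α) : deathTime S Z ≤ n :=
  Nat.sInf_le (by simp [hSn])

theorem notMem_deathTime (hSn : S n = ∅) (Z : Set α) : Z ∉ S (deathTime S Z) :=
  Nat.sInf_mem (s := {j | Z ∉ S j}) ⟨n, by simp [hSn]⟩

theorem mem_of_lt_deathTime {Z : Set α} {j : ℕ} (h : j < deathTime S Z) : Z ∈ S j :=
  not_not.1 (Nat.notMem_of_lt_sInf h)

theorem lt_deathTime_of_mem (hSmono : ∀ j, 1 ≤ j → j ≤ n → S j ⊆ S (j - 1)) (hSn : S n = ∅)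
    {Z : Set α} {j : ℕ} (hjn : j ≤ n) (hZ : Z ∈ S j) : j < deathTime S Z := by
  by_contra! h
  exact notMem_deathTime hSn Z (subset_of_le hSmono h hjn hZ)

theorem two_mul_nAlpha_add_le_deathTime (ht : 0 < t)
    (hrule : ∀ j, 1 ≤ j → j ≤ n → ∀ X ∈ S (j - 1),
      (X ∈ S j ↔ TransAlpha S C j X ∨ TransBeta S F C t j X ∨ TransGamma S F C t j X))
    (hSn : S n = ∅) {Z : Set α} {i : ℕ} (hi : i < deathTime S Z) :
    2 * t * NAlpha S C i (deathTime S Z - 1) Z + i ≤ deathTime S Z := by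
  set d := deathTime S Z
  have hmem : Z ∈ S (d - 1) := mem_of_lt_deathTime (by omega)
  by_contra! h
  refine notMem_deathTime hSn Z ((hrule d (by omega) (deathTime_le hSn Z) Z hmem).2 ?_)
  refine transAlpha_or_transBeta_or_transGamma_of_gt hmem ⟨i, by omega, ?_⟩
  rw [gt_iff_lt, one_div_two_mul_mul_sub_lt_iff ht]
  omega

theorem two_mul_card_le_card_Ioc_deathTime (ht : 0 < t)
    (hrule : ∀ j, 1 ≤ j → j ≤ n → ∀ X ∈ S (j - 1),
      (X ∈ S j ↔ TransAlpha S C j X ∨ TransBeta S F C t j X ∨ TransGamma S F C t j X))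
    (hSn : S n = ∅) {Z : Set α} {i : ℕ} (hi : i < deathTime S Z) {L : Finset ℕ}
    (hL : ∀ l ∈ L, i < l ∧ l < deathTime S Z ∧ TransAlpha S C l Z) :
    2 * t * #L ≤ #(Ioc i (deathTime S Z)) := by
  have hsub : L ⊆ {l ∈ Ioc i (deathTime S Z - 1) | TransAlpha S C l Z} := fun l hl =>
    have ⟨hil, hld, hα⟩ := hL l hl
    mem_filter.2 ⟨mem_Ioc.2 ⟨hil, by omega⟩, hα⟩
  have := Nat.mul_le_mul_left (2 * t) (card_le_card hsub)
  have := two_mul_nAlpha_add_le_deathTime ht hrule hSn hi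
  rw [Nat.card_Ioc]
  exact Nat.le_sub_of_add_le (by unfold NAlpha at this; omega)

theorem friend_eq_of_le (hSmono : ∀ j, 1 ≤ j → j ≤ n → S j ⊆ S (j - 1))
    (hlife : ∀ j, 1 ≤ j → j ≤ n → ∀ X Y : Set α, ∀ k < t,
      F (j - 1) X k = some Y → X ∈ S j → Y ∈ S j → F j X k = some Y)
    {X Y : Set α} {k i j : ℕ} (hk : k < t) (hij : i ≤ j) (hjn : j ≤ n) (hF : F i X k = some Y)
    (hX : X ∈ S j) (hY : Y ∈ S j) : F j X k = some Y := by
  induction j, hij using Nat.le_induction with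
  | base => exact hF
  | succ j _ ih =>
    have hX' : X ∈ S j := hSmono (j + 1) (by omega) hjn hX
    have hY' : Y ∈ S j := hSmono (j + 1) (by omega) hjn hY
    exact hlife (j + 1) (by omega) hjn X Y k hk (ih (by omega) hX' hY') hX hY

theorem deathTime_lt_of_friend_ne (hSmono : ∀ j, 1 ≤ j → j ≤ n → S j ⊆ S (j - 1))
    (hlife : ∀ j, 1 ≤ j → j ≤ n → ∀ X Y : Set α, ∀ k < t,
      F (j - 1) X k = some Y → X ∈ S j → Y ∈ S j → F j X k = some Y)
    {X Y Y' : Set α} {k l l' : ℕ} (hk : k < t) (hl : 1 ≤ l) (hll' : l < l') (hl'n : l' ≤ n)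
    (hF : F (l - 1) X k = some Y) (hF' : F (l' - 1) X k = some Y') (hX : X ∈ S (l' - 1))
    (hYY' : Y ≠ Y') : deathTime S Y < l' := by
  by_contra! h
  refine hYY' (Option.some_injective _ ?_)
  rw [← hF', friend_eq_of_le hSmono hlife hk (by omega : l - 1 ≤ l' - 1) (by omega) hF hX
    (mem_of_lt_deathTime (by omega))]

theorem two_mul_card_le_of_friend_transAlpha (ht : 0 < t)
    (hSmono : ∀ j, 1 ≤ j → j ≤ n → S j ⊆ S (j - 1))
    (hrule : ∀ j, 1 ≤ j → j ≤ n → ∀ X ∈ S (j - 1),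
      (X ∈ S j ↔ TransAlpha S C j X ∨ TransBeta S F C t j X ∨ TransGamma S F C t j X))
    (hlife : ∀ j, 1 ≤ j → j ≤ n → ∀ X Y : Set α, ∀ k < t,
      F (j - 1) X k = some Y → X ∈ S j → Y ∈ S j → F j X k = some Y)
    (hSn : S n = ∅) {X : Set α} {k : ℕ} (hk : k < t) {B : Finset ℕ} {Y : ℕ → Set α}
    (hB : ∀ l ∈ B, 1 ≤ l ∧ l ≤ n ∧ X ∈ S (l - 1) ∧ F (l - 1) X k = some (Y l) ∧
      TransAlpha S C l (Y l)) :
    2 * t * #B ≤ n := by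
  have hsurv : ∀ l ∈ B, l < deathTime S (Y l) := fun l hl => by
    obtain ⟨h1, hn, -, -, hα⟩ := hB l hl
    exact lt_deathTime_of_mem hSmono hSn hn ((hrule l h1 hn _ hα.1).2 (.inl hα))
  set first : Set α → ℕ := fun Z => sInf {l | l ∈ B ∧ Y l = Z}
  have hfirst : ∀ Z ∈ B.image Y, first Z ∈ B ∧ Y (first Z) = Z := fun Z hZ =>
    let ⟨l, hl, hlZ⟩ := mem_image.1 hZ
    Nat.sInf_mem (s := {l | l ∈ B ∧ Y l = Z}) ⟨l, hl, hlZ⟩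
  have hfirst_le : ∀ l ∈ B, first (Y l) ≤ l := fun l hl => Nat.sInf_le ⟨hl, rfl⟩
  have hcount : ∀ Z ∈ B.image Y,
      2 * t * #{l ∈ B | Y l = Z} ≤ #(Ioc (first Z - 1) (deathTime S Z)) := by
    intro Z hZ
    obtain ⟨hmem, hYZ⟩ := hfirst Z hZ
    have hfirst_lt := hsurv _ hmem
    rw [hYZ] at hfirst_lt
    refine two_mul_card_le_card_Ioc_deathTime ht hrule hSn (by omega) fun l hl => ?_
    obtain ⟨hlB, rfl⟩ := mem_filter.1 hl
    have := hfirst_le l hlB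
    have := (hB l hlB).1
    exact ⟨by omega, hsurv l hlB, (hB l hlB).2.2.2.2⟩
  have hdisj : (B.image Y : Set (Set α)).PairwiseDisjoint
      fun Z => Ioc (first Z - 1) (deathTime S Z) := by
    have key : ∀ Z ∈ B.image Y, ∀ Z' ∈ B.image Y, first Z < first Z' →
        Disjoint (Ioc (first Z - 1) (deathTime S Z)) (Ioc (first Z' - 1) (deathTime S Z')) := by
      intro Z hZ Z' hZ' hlt
      obtain ⟨hmem, hYZ⟩ := hfirst Z hZ
      obtain ⟨hmem', hYZ'⟩ := hfirst Z' hZ'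
      obtain ⟨h1, -, -, hF, -⟩ := hB _ hmem
      obtain ⟨-, hn', hX', hF', -⟩ := hB _ hmem'
      have := deathTime_lt_of_friend_ne hSmono hlife hk h1 hlt hn' hF hF' hX'
        (by rw [hYZ, hYZ']; rintro rfl; exact hlt.ne rfl)
      rw [hYZ] at this
      exact disjoint_left.2 fun x hx hx' => by
        rw [mem_Ioc] at hx hx'
        omega
    intro Z hZ Z' hZ' hne
    have hne' : first Z ≠ first Z' := fun h =>
      hne (by rw [← (hfirst Z hZ).2, h, (hfirst Z' hZ').2])
    rcases hne'.lt_or_gt with h | h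
    · exact key Z hZ Z' hZ' h
    · exact (key Z' hZ' Z hZ h).symm
  calc 2 * t * #B ≤ #(Ioc 0 n) := mul_card_le_card_of_pairwiseDisjoint hcount hdisj
        fun Z _ => Ioc_subset_Ioc (Nat.zero_le _) (deathTime_le hSn Z)
    _ = n := by simp

theorem two_mul_nBeta_le (ht : 0 < t) (hSmono : ∀ j, 1 ≤ j → j ≤ n → S j ⊆ S (j - 1))
    (hFmem : ∀ j, j ≤ n → ∀ X ∈ S j, ∀ k < t, ∀ Y, F j X k = some Y → Y ∈ S j)
    (hrule : ∀ j, 1 ≤ j → j ≤ n → ∀ X ∈ S (j - 1),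
      (X ∈ S j ↔ TransAlpha S C j X ∨ TransBeta S F C t j X ∨ TransGamma S F C t j X))
    (hlife : ∀ j, 1 ≤ j → j ≤ n → ∀ X Y : Set α, ∀ k < t,
      F (j - 1) X k = some Y → X ∈ S j → Y ∈ S j → F j X k = some Y)
    (hSn : S n = ∅) (X : Set α) {j : ℕ} (hjn : j ≤ n) :
    2 * NBeta S F C t 0 j X ≤ n := by
  set B := {l ∈ Ioc 0 j | TransBeta S F C t l X}
  have hslot : ∀ l ∈ B, ∃ k < t, ∃ Y, F (l - 1) X k = some Y ∧ (Y ∩ C l).Nonempty :=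
    fun l hl => (mem_filter.1 hl).2.2.2
  choose! k hk Y hFY hYC using hslot
  have hfiber : ∀ k₀ ∈ range t, 2 * t * #{l ∈ B | k l = k₀} ≤ n := by
    intro k₀ hk₀
    refine two_mul_card_le_of_friend_transAlpha ht hSmono hrule hlife hSn (X := X) (Y := Y)
      (mem_range.1 hk₀) fun l hl => ?_
    obtain ⟨hlB, rfl⟩ := mem_filter.1 hl
    obtain ⟨hl, hβ⟩ := mem_filter.1 hlB
    have := mem_Ioc.1 hl
    exact ⟨by omega, by omega, hβ.1, hFY l hlB,
      hFmem (l - 1) (by omega) X hβ.1 _ (hk l hlB) _ (hFY l hlB), hYC l hlB⟩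
  have : t * (2 * #B) ≤ t * n :=
    calc t * (2 * #B) = ∑ k₀ ∈ range t, 2 * t * #{l ∈ B | k l = k₀} := by
          rw [card_eq_sum_card_fiberwise fun l hl => mem_range.2 (hk l hl), ← mul_sum]
          ring
      _ ≤ ∑ _k₀ ∈ range t, n := sum_le_sum hfiber
      _ = t * n := by simp
  exact Nat.le_of_mul_le_mul_left this ht

end Evolution

theorem ncard_ge_of_mem_penultimate_general
    {α : Type*} [Fintype α]
    (n t : ℕ) (ht : 0 < t)
    (S : ℕ → Set (Set α)) (F : ℕ → Set α → ℕ → Option (Set α)) (C : ℕ → Set α)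
    -- the `C j` (for `j ≥ 1`) are pairwise disjoint (possibly empty) chains of `P`
    (hCdisj : ∀ i j, 1 ≤ i → 1 ≤ j → i ≠ j → Disjoint (C i) (C j))
    -- the societies decrease: `S 0 ⊇ S 1 ⊇ ⋯ ⊇ S n`
    (hSmono : ∀ j, 1 ≤ j → j ≤ n → S j ⊆ S (j - 1))
    -- each friend of a group of `S j` is a group of `S j`
    (hFmem : ∀ j, j ≤ n → ∀ X ∈ S j, ∀ k < t, ∀ Y, F j X k = some Y → Y ∈ S j)
    -- a group of `S (j-1)` survives to `S j` iff it makes a transition of type α, β or γ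
    (hrule : ∀ j, 1 ≤ j → j ≤ n → ∀ X ∈ S (j - 1),
      (X ∈ S j ↔ TransAlpha S C j X ∨ TransBeta S F C t j X ∨ TransGamma S F C t j X))
    -- friendship is a lifetime commitment
    (hlife : ∀ j, 1 ≤ j → j ≤ n → ∀ X Y : Set α, ∀ k < t,
      F (j - 1) X k = some Y → X ∈ S j → Y ∈ S j → F j X k = some Y)
    -- the evolution ends with the empty society
    (hSn : S n = ∅)
    (X : Set α) (hX : X ∈ S (n - 1)) :
    ((n : ℝ) - 2) / (4 * (t : ℝ)) ≤ (X.ncard : ℝ) := by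
  have hcover := Evolution.le_nAlpha_add_nBeta_add_nGamma hSmono hrule (Nat.sub_le n 1) hX
  have hα := Evolution.nAlpha_le_ncard (S := S) hCdisj X.toFinite 0 (n - 1)
  have hβ := Evolution.two_mul_nBeta_le ht hSmono hFmem hrule hlife hSn X (Nat.sub_le n 1)
  have hγ := Evolution.nGamma_add_nAlpha_le (S := S) (F := F) (C := C) ht X (n - 1)
  have hbound : n ≤ 4 * t * NAlpha S C 0 (n - 1) X + 2 := by
    have : n ≤ NAlpha S C 0 (n - 1) X + NBeta S F C t 0 (n - 1) X +
      NGamma S F C t 0 (n - 1) X + 1 := by omega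
    linarith
  have : (n : ℝ) ≤ 4 * t * X.ncard + 2 := by exact_mod_cast hbound.trans (by gcongr)
  rw [div_le_iff₀ (by positivity)]
  linarith

/-- **Lemma 4 (long evolutions produce large groups).**  Fix an evolution
`(S 0, F 0), …, (S n, F n)` of `t`-societies with `n ≥ 1` and `S n = ∅`.
If `X ∈ S (n-1)`, then `|X| ≥ (n - 2) / (4t)`. -/
theorem ncard_ge_of_mem_penultimate
    {α : Type*} [PartialOrder α] [Fintype α]
    (n t : ℕ) (hn : 1 ≤ n) (ht : 0 < t)
    (S : ℕ → Set (Set α)) (F : ℕ → Set α → ℕ → Option (Set α)) (C : ℕ → Set α)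
    -- the `C j` (for `j ≥ 1`) are pairwise disjoint (possibly empty) chains of `P`
    (hCchain : ∀ j, 1 ≤ j → IsChain (· ≤ ·) (C j))
    (hCdisj : ∀ i j, 1 ≤ i → 1 ≤ j → i ≠ j → Disjoint (C i) (C j))
    -- each `S j` is a finite set of groups
    (hSfin : ∀ j, j ≤ n → (S j).Finite)
    -- the societies decrease: `S 0 ⊇ S 1 ⊇ ⋯ ⊇ S n`
    (hSmono : ∀ j, 1 ≤ j → j ≤ n → S j ⊆ S (j - 1))
    -- each friend of a group of `S j` is a group of `S j`
    (hFmem : ∀ j, j ≤ n → ∀ X ∈ S j, ∀ k < t, ∀ Y, F j X k = some Y → Y ∈ S j)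
    -- a group of `S (j-1)` survives to `S j` iff it makes a transition of type α, β or γ
    (hrule : ∀ j, 1 ≤ j → j ≤ n → ∀ X ∈ S (j - 1),
      (X ∈ S j ↔ TransAlpha S C j X ∨ TransBeta S F C t j X ∨ TransGamma S F C t j X))
    -- friendship is a lifetime commitment
    (hlife : ∀ j, 1 ≤ j → j ≤ n → ∀ X Y : Set α, ∀ k < t,
      F (j - 1) X k = some Y → X ∈ S j → Y ∈ S j → F j X k = some Y)
    -- the evolution ends with the empty society
    (hSn : S n = ∅)
    (X : Set α) (hX : X ∈ S (n - 1)) :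
    ((n : ℝ) - 2) / (4 * (t : ℝ)) ≤ (X.ncard : ℝ) :=
  ncard_ge_of_mem_penultimate_general n t ht S F C hCdisj hSmono hFmem hrule hlife hSn X hX
end

section
/- Let r and s be integers with r ≥ 2 and s ≥ 2, and let P be a finite (𝐫+𝐬)-free poset of height q. For x ∈ P, let Z(x) be the set of elements z such that P contains a chain of size r with minimum element x and maximum element z; let b(x) = min{ h(z) : z ∈ Z(x) } if Z(x) ≠ ∅ and b(x) = q + 1 otherwise; and let I(x) = {h(x), h(x)+1, …, b(x) − 1}. Then whenever x and y are incomparable in P, either I(x) and I(y) have non-empty intersection, or at most s − 2 integers lie strictly between I(x) and I(y) (i.e., strictly greater than every element of one of the sets and strictly less than every element of the other). -/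
/-! If `x ≰ y` and `z` tops a chain `A` of size `r` above `x` with `h z = b x`, then the top `s`
elements of a maximum chain ending at `y` form, whenever `h y + 1 ≥ h z + s`, a chain of size `s`
incomparable to `A`: an element `w` of it with `w ≤ a ∈ A` would satisfy `w ≤ z` and `h w ≥ h z`,
forcing `w = z ≤ y`, while `a ≤ w` gives `x ≤ y`. So `(𝐫+𝐬)`-freeness bounds `h y` by
`b x + s - 2`, which bounds the gap between `I x` and `I y`. -/

open Finset

theorem lt_of_one_lt_card_of_bounds {α : Type*} [PartialOrder α] {x z : α} {c : Finset α}
    (hc : 1 < c.card) (hxc : ∀ w ∈ c, x ≤ w) (hcz : ∀ w ∈ c, w ≤ z) : x < z := by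
  obtain ⟨a, ha, a', ha', hne⟩ := one_lt_card.1 hc
  refine ((hxc a ha).trans (hcz a ha)).lt_of_ne fun hxz => hne ?_
  subst hxz
  exact ((hcz a ha).antisymm (hxc a ha)).trans ((hxc a' ha').antisymm (hcz a' ha'))

section Height

variable {α : Type*} [PartialOrder α]

def chainCardsWithMax (z : α) : Set ℕ :=
  {k | ∃ c : Finset α, c.card = k ∧ IsChain (· ≤ ·) (c : Set α) ∧ z ∈ c ∧ ∀ w ∈ c, w ≤ z}

def HasIncomparableChains (α : Type*) [LE α] (r s : ℕ) : Prop :=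
  ∃ A B : Finset α, A.card = r ∧ B.card = s ∧ Disjoint A B ∧
    IsChain (· ≤ ·) (A : Set α) ∧ IsChain (· ≤ ·) (B : Set α) ∧
    ∀ a ∈ A, ∀ b ∈ B, ¬ a ≤ b ∧ ¬ b ≤ a

def chainTopsFrom (r : ℕ) (x : α) : Set α :=
  {z | ∃ c : Finset α, c.card = r ∧ IsChain (· ≤ ·) (c : Set α) ∧
    x ∈ c ∧ z ∈ c ∧ (∀ w ∈ c, x ≤ w) ∧ (∀ w ∈ c, w ≤ z)}

def IsHeightFunction (h : α → ℕ) : Prop :=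
  ∀ z, IsGreatest (chainCardsWithMax z) (h z)

variable {h : α → ℕ}

theorem one_le_height (hh : IsHeightFunction h) (z : α) : 1 ≤ h z :=
  (hh z).2 ⟨{z}, card_singleton z, by simp [IsChain], mem_singleton_self z, by simp⟩

theorem strictMono_height (hh : IsHeightFunction h) : StrictMono h := by
  classical
  intro w z hwz
  obtain ⟨c, hcard, hc, -, hcw⟩ := (hh w).1
  rw [← hcard]
  have hzc : z ∉ c := fun hz => (hcw z hz).not_gt hwz
  have hcz : ∀ v ∈ c, v ≤ z := fun v hv => (hcw v hv).trans hwz.le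
  refine Nat.lt_of_succ_le ((hh z).2 ⟨insert z c, card_insert_of_notMem hzc, ?_,
    mem_insert_self z c, ?_⟩)
  · rw [coe_insert]
    exact hc.insert fun v hv _ => Or.inr (hcz v hv)
  · simpa using hcz

theorem height_le_of_isGreatest {q : ℕ}
    (hq : IsGreatest {k | ∃ c : Finset α, c.card = k ∧ IsChain (· ≤ ·) (c : Set α)} q)
    (hh : IsHeightFunction h) (z : α) : h z ≤ q := by
  obtain ⟨c, hcard, hc, -⟩ := (hh z).1
  exact hq.2 ⟨c, hcard, hc⟩

theorem injOn_height_of_isChain (hh : IsHeightFunction h)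
    {C : Set α} (hC : IsChain (· ≤ ·) C) : Set.InjOn h C := by
  intro w hw w' hw' hww'
  by_contra hne
  rcases hC hw hw' hne with hle | hle
  · exact (strictMono_height hh (hle.lt_of_ne hne)).ne hww'
  · exact (strictMono_height hh (hle.lt_of_ne' hne)).ne' hww'

theorem image_height_eq_Icc (hh : IsHeightFunction h) {y : α}
    {C : Finset α} (hC : IsChain (· ≤ ·) (C : Set α)) (hCy : ∀ w ∈ C, w ≤ y)
    (hcard : C.card = h y) : C.image h = Icc 1 (h y) := by
  refine eq_of_subset_of_card_le (fun k hk => ?_) ?_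
  · obtain ⟨w, hw, rfl⟩ := mem_image.1 hk
    exact mem_Icc.2 ⟨one_le_height hh w, (strictMono_height hh).monotone (hCy w hw)⟩
  · rw [card_image_of_injOn (injOn_height_of_isChain hh hC), hcard, Nat.card_Icc,
      Nat.add_sub_cancel]

theorem exists_chain_card_eq_of_le_height (hh : IsHeightFunction h)
    (y : α) {m : ℕ} (hm : m ≤ h y) :
    ∃ B : Finset α, B.card = m ∧ IsChain (· ≤ ·) (B : Set α) ∧ ∀ w ∈ B, w ≤ y ∧ h y < h w + m := by
  obtain ⟨C, hcard, hC, -, hCy⟩ := (hh y).1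
  set B := C.filter fun w => h y < h w + m
  have hB : IsChain (· ≤ ·) (B : Set α) := hC.mono (coe_subset.2 (filter_subset _ C))
  have himage : B.image h = Ioc (h y - m) (h y) := by
    rw [← filter_image (p := fun k => h y < k + m), image_height_eq_Icc hh hC hCy hcard]
    ext k
    simp only [mem_filter, mem_Icc, mem_Ioc]
    omega
  refine ⟨B, ?_, hB, fun w hw => ?_⟩
  · rw [← card_image_of_injOn (injOn_height_of_isChain hh hB), himage, Nat.card_Ioc]
    omega
  · obtain ⟨hwC, hw⟩ := mem_filter.1 hw
    exact ⟨hCy w hwC, hw⟩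

theorem height_lt_of_mem_chainTopsFrom {r : ℕ} (hr : 2 ≤ r)
    (hh : IsHeightFunction h) {x z : α} (hz : z ∈ chainTopsFrom r x) :
    h x < h z := by
  obtain ⟨c, hcard, -, -, -, hxc, hcz⟩ := hz
  exact strictMono_height hh (lt_of_one_lt_card_of_bounds (by omega) hxc hcz)

theorem height_add_one_lt_of_mem_chainTopsFrom {r s : ℕ} (hfree : ¬ HasIncomparableChains α r s)
    (hh : IsHeightFunction h) {x y z : α} (hxy : ¬ x ≤ y)
    (hz : z ∈ chainTopsFrom r x) : h y + 1 < h z + s := by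
  obtain ⟨A, hAcard, hA, -, hzA, hxA, hAz⟩ := hz
  by_contra! hle
  have := one_le_height hh z
  obtain ⟨B, hBcard, hB, hBy⟩ := exists_chain_card_eq_of_le_height hh y (m := s) (by omega)
  have hincomp : ∀ a ∈ A, ∀ w ∈ B, ¬ a ≤ w ∧ ¬ w ≤ a := by
    intro a ha w hw
    obtain ⟨hwy, hhw⟩ := hBy w hw
    refine ⟨fun haw => hxy ((hxA a ha).trans (haw.trans hwy)), fun hwa => ?_⟩
    obtain rfl | hwz := (hwa.trans (hAz a ha)).eq_or_lt
    · exact hxy ((hxA w hzA).trans hwy)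
    · have := strictMono_height hh hwz
      omega
  have hdisj : Disjoint A B :=
    disjoint_left.2 fun v hvA hvB => (hincomp v hvA v hvB).1 le_rfl
  exact hfree ⟨A, B, hAcard, hBcard, hdisj, hA, hB, hincomp⟩

end Height

def gapBetween (I J : Finset ℕ) : Set ℕ :=
  {k | ((∀ a ∈ I, a < k) ∧ (∀ c ∈ J, k < c)) ∨ ((∀ c ∈ J, c < k) ∧ (∀ a ∈ I, k < a))}

theorem gapBetween_comm (I J : Finset ℕ) : gapBetween I J = gapBetween J I := by
  ext k
  exact or_comm

theorem gapBetween_Icc_eq_Ioo {a a' c c' : ℕ} (ha : a ≤ a') (hc : c ≤ c') (hac : a' < c) :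
    gapBetween (Icc a a') (Icc c c') = Set.Ioo a' c := by
  ext k
  simp only [gapBetween, Set.mem_ofPred_eq, mem_Icc, Set.mem_Ioo]
  constructor
  · rintro (⟨hI, hJ⟩ | ⟨hJ, hI⟩)
    · exact ⟨hI a' ⟨ha, le_rfl⟩, hJ c ⟨le_rfl, hc⟩⟩
    · have := hJ c ⟨le_rfl, hc⟩
      have := hI a' ⟨ha, le_rfl⟩
      omega
  · rintro ⟨hk, hk'⟩
    exact Or.inl ⟨fun _ hi => by omega, fun _ hj => by omega⟩

theorem ncard_gapBetween_Icc {a a' c c' : ℕ} (ha : a ≤ a') (hc : c ≤ c') (hac : a' < c) :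
    (gapBetween (Icc a a') (Icc c c')).ncard = c - a' - 1 := by
  rw [gapBetween_Icc_eq_Ioo ha hc hac, ← coe_Ioo, Set.ncard_coe_finset, Nat.card_Ioo]

theorem Icc_inter_nonempty_or_ncard_gapBetween_le {a a' c c' n : ℕ} (ha : a ≤ a')
    (hc : c ≤ c') (hac : a' < c → c ≤ a' + n + 1) (hca : c' < a → a ≤ c' + n + 1) :
    (Icc a a' ∩ Icc c c').Nonempty ∨ (gapBetween (Icc a a') (Icc c c')).ncard ≤ n := by
  refine or_iff_not_imp_left.2 fun hdisj => ?_
  rcases lt_or_ge a' c with hlt | hle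
  · rw [ncard_gapBetween_Icc ha hc hlt]
    have := hac hlt
    omega
  · have hlt : c' < a := by
      by_contra! hge
      exact hdisj ⟨max a c, by simp only [mem_inter, mem_Icc]; omega⟩
    rw [gapBetween_comm, ncard_gapBetween_Icc hc ha hlt]
    have := hca hlt
    omega

theorem intervals_of_incomparable_intersect_or_small_gap_general
    {α : Type*} [PartialOrder α]
    (r s q : ℕ) (hr : 2 ≤ r)
    -- `P` is `(𝐫 + 𝐬)`-free
    (hfree : ¬ ∃ A B : Finset α, A.card = r ∧ B.card = s ∧ Disjoint A B ∧
      IsChain (· ≤ ·) (A : Set α) ∧ IsChain (· ≤ ·) (B : Set α) ∧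
      ∀ a ∈ A, ∀ b ∈ B, ¬ a ≤ b ∧ ¬ b ≤ a)
    -- `q` is the height of `P`
    (hq : IsGreatest {k | ∃ c : Finset α, c.card = k ∧ IsChain (· ≤ ·) (c : Set α)} q)
    -- `h` is the height function of `P`
    (h : α → ℕ)
    (hh : ∀ z : α, IsGreatest {k | ∃ c : Finset α, c.card = k ∧
      IsChain (· ≤ ·) (c : Set α) ∧ z ∈ c ∧ ∀ w ∈ c, w ≤ z} (h z))
    -- `Z x` is the set of tops of chains of size `r` with minimum element `x`
    (Z : α → Set α)
    (hZ : ∀ x : α, Z x = {z | ∃ c : Finset α, c.card = r ∧ IsChain (· ≤ ·) (c : Set α) ∧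
      x ∈ c ∧ z ∈ c ∧ (∀ w ∈ c, x ≤ w) ∧ (∀ w ∈ c, w ≤ z)})
    -- `b x` is the minimum height of an element of `Z x`, or `q + 1` if `Z x = ∅`
    (b : α → ℕ)
    (hbmin : ∀ x : α, (Z x).Nonempty → IsLeast (h '' Z x) (b x))
    (hbempty : ∀ x : α, ¬ (Z x).Nonempty → b x = q + 1) :
    -- with `I x = Finset.Icc (h x) (b x - 1)`: incomparable elements have intersecting
    -- intervals, or at most `s - 2` integers lie strictly between their intervals
    ∀ x y : α, ¬ x ≤ y → ¬ y ≤ x →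
      (Finset.Icc (h x) (b x - 1) ∩ Finset.Icc (h y) (b y - 1)).Nonempty ∨
      Set.ncard {k : ℕ |
        ((∀ a ∈ Finset.Icc (h x) (b x - 1), a < k) ∧
          (∀ c ∈ Finset.Icc (h y) (b y - 1), k < c)) ∨
        ((∀ c ∈ Finset.Icc (h y) (b y - 1), c < k) ∧
          (∀ a ∈ Finset.Icc (h x) (b x - 1), k < a))} ≤ s - 2 := by
  obtain rfl : Z = chainTopsFrom r := funext hZ
  have hb : ∀ u, (∃ z ∈ chainTopsFrom r u, h z = b u) ∨ b u = q + 1 := fun u =>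
    (em _).imp (fun hne => (hbmin u hne).1) (hbempty u)
  have hI : ∀ u, h u < b u := fun u => by
    rcases hb u with ⟨z, hz, hbz⟩ | hbq
    · exact hbz ▸ height_lt_of_mem_chainTopsFrom hr hh hz
    · have := height_le_of_isGreatest hq hh u
      omega
  have hgap : ∀ u v, ¬ u ≤ v → b u ≤ h v → h v + 1 < b u + s := fun u v huv hle => by
    rcases hb u with ⟨z, hz, hbz⟩ | hbq
    · exact hbz ▸ height_add_one_lt_of_mem_chainTopsFrom hfree hh huv hz
    · have := height_le_of_isGreatest hq hh v
      omega
  intro x y hxy hyx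
  have := hI x
  have := hI y
  refine Icc_inter_nonempty_or_ncard_gapBetween_le (by omega) (by omega) (fun hlt => ?_) fun hlt => ?_
  · have := hgap x y hxy (by omega)
    omega
  · have := hgap y x hyx (by omega)
    omega

/-- Let `r, s ≥ 2` and let `P` (the finite partial order `α`) be a finite `(𝐫+𝐬)`-free poset
of height `q`, with height function `h` (`h z` is the maximum size of a chain with maximum
element `z`).  For `x ∈ P`, let `Z x` be the set of elements `z` such that `P` contains a
chain of size `r` with minimum element `x` and maximum element `z`; let
`b x = min {h z | z ∈ Z x}` if `Z x ≠ ∅` and `b x = q + 1` otherwise; and let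
`I x = {h x, h x + 1, …, b x - 1}`.  Then whenever `x` and `y` are incomparable, either
`I x` and `I y` intersect, or at most `s - 2` integers lie strictly between `I x` and `I y`
(strictly greater than every element of one set and strictly less than every element of
the other). -/
theorem intervals_of_incomparable_intersect_or_small_gap
    {α : Type*} [PartialOrder α] [Fintype α]
    (r s q : ℕ) (hr : 2 ≤ r) (hs : 2 ≤ s)
    -- `P` is `(𝐫 + 𝐬)`-free
    (hfree : ¬ ∃ A B : Finset α, A.card = r ∧ B.card = s ∧ Disjoint A B ∧
      IsChain (· ≤ ·) (A : Set α) ∧ IsChain (· ≤ ·) (B : Set α) ∧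
      ∀ a ∈ A, ∀ b ∈ B, ¬ a ≤ b ∧ ¬ b ≤ a)
    -- `q` is the height of `P`
    (hq : IsGreatest {k | ∃ c : Finset α, c.card = k ∧ IsChain (· ≤ ·) (c : Set α)} q)
    -- `h` is the height function of `P`
    (h : α → ℕ)
    (hh : ∀ z : α, IsGreatest {k | ∃ c : Finset α, c.card = k ∧
      IsChain (· ≤ ·) (c : Set α) ∧ z ∈ c ∧ ∀ w ∈ c, w ≤ z} (h z))
    -- `Z x` is the set of tops of chains of size `r` with minimum element `x`
    (Z : α → Set α)
    (hZ : ∀ x : α, Z x = {z | ∃ c : Finset α, c.card = r ∧ IsChain (· ≤ ·) (c : Set α) ∧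
      x ∈ c ∧ z ∈ c ∧ (∀ w ∈ c, x ≤ w) ∧ (∀ w ∈ c, w ≤ z)})
    -- `b x` is the minimum height of an element of `Z x`, or `q + 1` if `Z x = ∅`
    (b : α → ℕ)
    (hbmin : ∀ x : α, (Z x).Nonempty → IsLeast (h '' Z x) (b x))
    (hbempty : ∀ x : α, ¬ (Z x).Nonempty → b x = q + 1) :
    -- with `I x = Finset.Icc (h x) (b x - 1)`: incomparable elements have intersecting
    -- intervals, or at most `s - 2` integers lie strictly between their intervals
    ∀ x y : α, ¬ x ≤ y → ¬ y ≤ x →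
      (Finset.Icc (h x) (b x - 1) ∩ Finset.Icc (h y) (b y - 1)).Nonempty ∨
      Set.ncard {k : ℕ |
        ((∀ a ∈ Finset.Icc (h x) (b x - 1), a < k) ∧
          (∀ c ∈ Finset.Icc (h y) (b y - 1), k < c)) ∨
        ((∀ c ∈ Finset.Icc (h y) (b y - 1), c < k) ∧
          (∀ a ∈ Finset.Icc (h x) (b x - 1), k < a))} ≤ s - 2 :=
  intervals_of_incomparable_intersect_or_small_gap_general r s q hr hfree hq h hh Z hZ b hbmin
    hbempty
end
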